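/- arXiv:math/0502084 — 5 statements merged into one kernel-verified Lean document; each statement's English description precedes it below -/
import Mathlib

section
/- Let k be a field of characteristic 0. The space of all polynomials g ∈ k[x,y] satisfying g(x−z, y−z) + g(x,z) − g(y,z) − g(x,y) = 0 in k[x,y,z] is exactly the linear span of the polynomials x^n − y^n − (x−y)^n for n ≥ 0 (where n = 0 gives the constant −1, equivalently constants are solutions). -/
/-!
Differentiating the equation in `z` at `z = 0` shows that `D = ∂ₓ + ∂ᵧ` maps every solution
`g` to `w(x) - w(y)` with `w(t) = ∂ᵧg(t, 0)`. Since
`D (xⁿ⁺¹ - yⁿ⁺¹ - (x - y)ⁿ⁺¹) = (n + 1)(xⁿ - yⁿ)`, in characteristic zero some combination `G`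
of the basic solutions has `D G = D g`. Then `q = g - G` is a solution killed by `D`, hence
invariant under diagonal translation: `q(x, y) = q(x - y, 0)`. Setting `z = 0` in the equation
shows that `q(t, 0)` does not depend on `t`, so `q` is constant, and constants are multiples of
the basic solution for `n = 0`.
-/

namespace MvPolynomial

variable {R σ τ : Type*} [CommSemiring R]

theorem pderiv_aeval [Fintype σ] (f : σ → MvPolynomial τ R) (i : τ) (p : MvPolynomial σ R) :
    pderiv i (aeval f p) = ∑ j, aeval f (pderiv j p) * pderiv i (f j) := by
  classical
  induction p using MvPolynomial.induction_on with
  | C a => simp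
  | add p q hp hq => simp only [map_add, hp, hq, add_mul, Finset.sum_add_distrib]
  | mul_X p j hp =>
    simp only [map_mul, aeval_X, pderiv_mul, hp, map_add, add_mul, Finset.sum_add_distrib,
      Finset.sum_mul, pderiv_X, Pi.single_apply, mul_ite, mul_one, mul_zero, apply_ite (aeval f),
      map_zero, ite_mul, zero_mul, Finset.sum_ite_eq, Finset.mem_univ, if_true,
      mul_right_comm _ (f j)]

theorem aeval_update_zero_of_pderiv_eq_zero [NoZeroDivisors R] [CharZero R] [DecidableEq σ]
    {i : σ} {p : MvPolynomial σ R} (h : pderiv i p = 0) :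
    aeval (Function.update X i 0) p = p := by
  conv_rhs => rw [← aeval_X_left_apply p]
  refine eval₂_congr _ _ _ fun {j c} hj hc => ?_
  obtain rfl | hji := eq_or_ne j i
  · refine absurd ?_ hc
    have hle : Finsupp.single j 1 ≤ c :=
      Finsupp.single_le_iff.mpr (Nat.one_le_iff_ne_zero.mpr (Finsupp.mem_support_iff.mp hj))
    have := coeff_pderiv (i := j) p (c - Finsupp.single j 1)
    rw [h, tsub_add_cancel_of_le hle, coeff_zero] at this
    exact (mul_eq_zero.mp this.symm).resolve_right (Nat.cast_add_one_ne_zero _)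
  · exact Function.update_of_ne hji _ _

theorem comp_aeval_pair_apply {S B : Type*} [CommSemiring S] [Algebra R S] [CommSemiring B]
    [Algebra R B] (φ : S →ₐ[R] B) (a b : S) (p : MvPolynomial (Fin 2) R) :
    φ (aeval ![a, b] p) = aeval ![φ a, φ b] p := by
  rw [comp_aeval_apply]
  congr 1
  ext i : 1
  fin_cases i <;> simp

theorem aeval_X_zero_X_one (p : MvPolynomial (Fin 2) R) : aeval ![X 0, X 1] p = p := by
  convert aeval_X_left_apply p
  ext i : 1
  fin_cases i <;> rfl

end MvPolynomial

open MvPolynomial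

section

variable {k : Type*} [Field k]

noncomputable def cocycleDefect : MvPolynomial (Fin 2) k →ₗ[k] MvPolynomial (Fin 3) k :=
  (aeval ![X 0 - X 2, X 1 - X 2]).toLinearMap + (aeval ![X 0, X 2]).toLinearMap
    - (aeval ![X 1, X 2]).toLinearMap - (aeval ![X 0, X 1]).toLinearMap

theorem cocycleDefect_apply (g : MvPolynomial (Fin 2) k) :
    cocycleDefect g = aeval ![X 0 - X 2, X 1 - X 2] g + aeval ![X 0, X 2] g
      - aeval ![X 1, X 2] g - aeval ![X 0, X 1] g :=
  rfl

variable (k) in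
noncomputable def basicSolution (n : ℕ) : MvPolynomial (Fin 2) k :=
  X 0 ^ n - X 1 ^ n - (X 0 - X 1) ^ n

theorem cocycleDefect_basicSolution (n : ℕ) : cocycleDefect (basicSolution k n) = 0 := by
  simp only [cocycleDefect_apply, basicSolution, map_sub, map_pow, aeval_X, Matrix.cons_val_zero,
    Matrix.cons_val_one]
  ring

theorem span_basicSolution_le_ker :
    Submodule.span k (Set.range (basicSolution k)) ≤ LinearMap.ker cocycleDefect :=
  Submodule.span_le.mpr (Set.range_subset_iff.mpr cocycleDefect_basicSolution)

noncomputable def diagDeriv : Derivation k (MvPolynomial (Fin 2) k) (MvPolynomial (Fin 2) k) :=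
  pderiv 0 + pderiv 1

theorem diagDeriv_apply (g : MvPolynomial (Fin 2) k) : diagDeriv g = pderiv 0 g + pderiv 1 g :=
  rfl

theorem aeval_X_zero_eq_of_mem_ker {g : MvPolynomial (Fin 2) k}
    (hg : g ∈ LinearMap.ker cocycleDefect) :
    aeval ![(X 0 : MvPolynomial (Fin 2) k), 0] g = aeval ![X 1, 0] g := by
  have h := congrArg (aeval (![X 0, X 1, 0] : Fin 3 → MvPolynomial (Fin 2) k))
    (LinearMap.mem_ker.mp hg)
  simp only [cocycleDefect_apply, map_add, map_sub, map_zero, aeval_X,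
    comp_aeval_pair_apply, Matrix.cons_val_zero, Matrix.cons_val_one, Matrix.head_cons,
    Matrix.cons_val_two, Matrix.tail_cons, sub_zero, aeval_X_zero_X_one] at h
  linear_combination h

theorem exists_diagDeriv_eq_sub_of_mem_ker {g : MvPolynomial (Fin 2) k}
    (hg : g ∈ LinearMap.ker cocycleDefect) :
    ∃ w : Polynomial k, diagDeriv g = Polynomial.aeval (X 0) w - Polynomial.aeval (X 1) w := by
  refine ⟨aeval ![Polynomial.X, 0] (pderiv 1 g), ?_⟩
  have h := congrArg (fun P => aeval (![X 0, X 1, 0] : Fin 3 → MvPolynomial (Fin 2) k)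
    (pderiv 2 P)) (LinearMap.mem_ker.mp hg)
  simp only [cocycleDefect_apply, map_add, map_sub, map_zero, pderiv_aeval, Fin.sum_univ_two,
    Matrix.cons_val_zero, Matrix.cons_val_one, Matrix.head_cons, pderiv_X_self, pderiv_X_of_ne,
    ne_eq, Fin.reduceEq, not_false_eq_true, mul_zero, mul_one, zero_sub, mul_neg, add_zero,
    zero_add, map_neg, aeval_X, comp_aeval_pair_apply, Matrix.cons_val_two, Matrix.tail_cons,
    sub_zero, aeval_X_zero_X_one] at h
  simp only [diagDeriv_apply, comp_aeval_pair_apply, Polynomial.aeval_X, map_zero]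
  linear_combination -h

theorem diagDeriv_basicSolution_succ (n : ℕ) :
    diagDeriv (basicSolution k (n + 1)) = ((n : k) + 1) • (X 0 ^ n - X 1 ^ n) := by
  simp only [diagDeriv_apply, basicSolution, map_sub, pderiv_pow, pderiv_X_self, pderiv_X_of_ne,
    ne_eq, Fin.reduceEq, not_false_eq_true, Nat.add_sub_cancel, Algebra.smul_def, map_add,
    map_natCast, map_one, Nat.cast_add, Nat.cast_one]
  ring

variable [CharZero k]

theorem exists_mem_span_diagDeriv_eq (w : Polynomial k) :
    ∃ G ∈ Submodule.span k (Set.range (basicSolution k)),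
      diagDeriv G = Polynomial.aeval (X 0) w - Polynomial.aeval (X 1) w := by
  induction w using Polynomial.induction_on' with
  | add w₁ w₂ h₁ h₂ =>
    obtain ⟨G₁, hG₁, hD₁⟩ := h₁
    obtain ⟨G₂, hG₂, hD₂⟩ := h₂
    refine ⟨G₁ + G₂, add_mem hG₁ hG₂, ?_⟩
    rw [map_add, hD₁, hD₂, map_add, map_add]
    ring
  | monomial n c =>
    refine ⟨(c / (n + 1)) • basicSolution k (n + 1),
      Submodule.smul_mem _ _ (Submodule.subset_span ⟨_, rfl⟩), ?_⟩
    rw [Derivation.map_smul, diagDeriv_basicSolution_succ, smul_smul,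
      div_mul_cancel₀ _ (Nat.cast_add_one_ne_zero n)]
    simp [Polynomial.aeval_monomial, Algebra.smul_def, mul_sub]

theorem aeval_sub_zero_eq_of_diagDeriv_eq_zero {q : MvPolynomial (Fin 2) k}
    (hq : diagDeriv q = 0) : aeval ![X 0 - X 1, 0] q = q := by
  have hP : pderiv 2 (aeval ![X 0 + X 2, X 1 + X 2] q - aeval ![X 0, X 1] q :
      MvPolynomial (Fin 3) k) = 0 := by
    simp only [map_sub, pderiv_aeval, Fin.sum_univ_two, Matrix.cons_val_zero,
      Matrix.cons_val_one, map_add, pderiv_X_self, pderiv_X_of_ne, ne_eq, Fin.reduceEq,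
      not_false_eq_true, mul_zero, mul_one, zero_add, add_zero, sub_zero]
    rw [← map_add, ← diagDeriv_apply, hq, map_zero]
  have htranslate :
      aeval ![X 0 + X 2, X 1 + X 2] q = (aeval ![X 0, X 1] q : MvPolynomial (Fin 3) k) := by
    have h := aeval_update_zero_of_pderiv_eq_zero hP
    simp only [map_sub, comp_aeval_pair_apply, map_add, aeval_X, Function.update_self, ne_eq,
      Fin.reduceEq, not_false_eq_true, Function.update_of_ne, add_zero, sub_self] at h
    exact sub_eq_zero.mp h.symm
  have h := congrArg (aeval (![X 0 - X 1, 0, X 1] : Fin 3 → MvPolynomial (Fin 2) k)) htranslate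
  simp only [comp_aeval_pair_apply, map_add, aeval_X, Matrix.cons_val_zero,
    Matrix.cons_val_one, Matrix.head_cons, Matrix.cons_val_two, Matrix.tail_cons, zero_add,
    sub_add_cancel, aeval_X_zero_X_one] at h
  exact h.symm

theorem eq_C_of_mem_ker_of_diagDeriv_eq_zero {q : MvPolynomial (Fin 2) k}
    (hker : q ∈ LinearMap.ker cocycleDefect) (hD : diagDeriv q = 0) :
    q = C (constantCoeff q) := by
  have h := congrArg (aeval ![(X 0 - X 1 : MvPolynomial (Fin 2) k), 0])
    (aeval_X_zero_eq_of_mem_ker hker)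
  simp only [comp_aeval_pair_apply, aeval_X, map_zero, Matrix.cons_val_zero, Matrix.cons_val_one,
    aeval_sub_zero_eq_of_diagDeriv_eq_zero hD] at h
  rwa [← Matrix.zero_empty, Matrix.cons_zero_zero, Matrix.cons_zero_zero, aeval_zero,
    algebraMap_eq] at h

theorem ker_cocycleDefect :
    LinearMap.ker cocycleDefect = Submodule.span k (Set.range (basicSolution k)) := by
  refine le_antisymm (fun g hg => ?_) span_basicSolution_le_ker
  obtain ⟨w, hw⟩ := exists_diagDeriv_eq_sub_of_mem_ker hg
  obtain ⟨G, hG, hGw⟩ := exists_mem_span_diagDeriv_eq w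
  have hconst := eq_C_of_mem_ker_of_diagDeriv_eq_zero (sub_mem hg (span_basicSolution_le_ker hG))
    (by rw [map_sub, hw, hGw, sub_self])
  have hC : ∀ c : k, C c ∈ Submodule.span k (Set.range (basicSolution k)) := fun c => by
    have : C c = (-c) • basicSolution k 0 := by simp [basicSolution, smul_eq_C_mul]
    rw [this]
    exact Submodule.smul_mem _ _ (Submodule.subset_span ⟨0, rfl⟩)
  rw [← sub_add_cancel g G, hconst]
  exact add_mem (hC _) hG

end

theorem stmt1 (k : Type*) [Field k] [CharZero k] :
    {g : MvPolynomial (Fin 2) k |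
      aeval ![(X 0 : MvPolynomial (Fin 3) k) - X 2, X 1 - X 2] g
        + aeval ![(X 0 : MvPolynomial (Fin 3) k), X 2] g
        - aeval ![(X 1 : MvPolynomial (Fin 3) k), X 2] g
        - aeval ![(X 0 : MvPolynomial (Fin 3) k), X 1] g = 0}
    = ↑(Submodule.span k
        {p : MvPolynomial (Fin 2) k |
          ∃ n : ℕ, p = (X 0 : MvPolynomial (Fin 2) k) ^ n - X 1 ^ n - (X 0 - X 1) ^ n}) := by
  have hS : {p : MvPolynomial (Fin 2) k |
      ∃ n : ℕ, p = (X 0 : MvPolynomial (Fin 2) k) ^ n - X 1 ^ n - (X 0 - X 1) ^ n} =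
      Set.range (basicSolution k) := by
    ext p
    simp only [Set.mem_ofPred_eq, Set.mem_range, basicSolution, eq_comm]
  rw [hS, ← ker_cocycleDefect]
  rfl
end

section
/- Let F3 = k⟨x,y,z⟩ and let I3 be the linear span of all words of the form w x w' y w'', w x w' z w'', or w y w' z w''. Let τ23 be the derivation of F3 defined by τ23(x) = 0, τ23(y) = [y,z], τ23(z) = [z,y]. Then τ23(I3) ⊆ I3. -/
open FreeAlgebra

/-- The word associated to a list of letters, in the free algebra. -/
noncomputable def wordOf (k : Type*) [Field k] {n : ℕ} (l : List (Fin n)) : FreeAlgebra k (Fin n) :=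
  (l.map (FreeAlgebra.ι k)).prod

section Aux

variable (k : Type*) [Field k]

theorem wordOf_nil : wordOf k ([] : List (Fin 3)) = 1 := rfl

theorem wordOf_cons (c : Fin 3) (t : List (Fin 3)) :
    wordOf k (c :: t) = ι k c * wordOf k t := by
  simp [wordOf]

theorem wordOf_append (a b : List (Fin 3)) :
    wordOf k (a ++ b) = wordOf k a * wordOf k b := by
  simp [wordOf]

/-- A list has an ascending pair (some letter strictly smaller than a later letter). -/
def asc : List (Fin 3) → Prop
  | [] => False
  | c :: t => (∃ b ∈ t, c < b) ∨ asc t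

theorem asc_decomp : ∀ {l : List (Fin 3)}, asc l →
    ∃ w w' w'' : List (Fin 3), ∃ i j : Fin 3, i < j ∧ l = w ++ i :: (w' ++ j :: w'')
  | [], h => h.elim
  | c :: t, h => by
    rcases h with ⟨b, hb, hcb⟩ | h
    · obtain ⟨w', w'', rfl⟩ := List.append_of_mem hb
      exact ⟨[], w', w'', c, b, hcb, rfl⟩
    · obtain ⟨w, w', w'', i, j, hij, rfl⟩ := asc_decomp h
      exact ⟨c :: w, w', w'', i, j, hij, rfl⟩

theorem asc_of_decomp (w w' w'' : List (Fin 3)) (i j : Fin 3) (hij : i < j) :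
    asc (w ++ i :: (w' ++ j :: w'')) := by
  induction w with
  | nil => exact Or.inl ⟨j, by simp, hij⟩
  | cons a w ih => exact Or.inr ih

theorem asc_mid12 (u t : List (Fin 3)) : asc (u ++ 1 :: 2 :: t) := by
  induction u with
  | nil => exact Or.inl ⟨2, by simp, by decide⟩
  | cons a u ih => exact Or.inr ih

theorem asc_sub : ∀ (u : List (Fin 3)) {t : List (Fin 3)} {c : Fin 3}, 1 ≤ c →
    asc (u ++ c :: t) → asc (u ++ 2 :: 1 :: t)
  | [], t, c, hc, h => by
    rcases h with ⟨b, hb, hcb⟩ | h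
    · exact Or.inr (Or.inl ⟨b, hb, lt_of_le_of_lt hc hcb⟩)
    · exact Or.inr (Or.inr h)
  | a :: u, t, c, hc, h => by
    rw [List.cons_append] at h ⊢
    rcases h with ⟨b, hb, hab⟩ | h
    · rcases List.mem_append.1 hb with hbu | hbc
      · exact Or.inl ⟨b, List.mem_append.2 (Or.inl hbu), hab⟩
      · rcases List.mem_cons.1 hbc with rfl | hbt
        · refine Or.inl ⟨2, by simp, lt_of_lt_of_le hab ?_⟩
          omega
        · exact Or.inl ⟨b, by simp [hbt], hab⟩
    · exact Or.inr (asc_sub u hc h)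

/-- The generating set of `I3`. -/
def genSet : Set (FreeAlgebra k (Fin 3)) :=
  {a | ∃ w w' w'' : List (Fin 3), ∃ i j : Fin 3, i < j ∧
    a = wordOf k w * ι k i * wordOf k w' * ι k j * wordOf k w''}

theorem mem_of_asc {l : List (Fin 3)} (h : asc l) :
    wordOf k l ∈ Submodule.span k (genSet k) := by
  obtain ⟨w, w', w'', i, j, hij, rfl⟩ := asc_decomp h
  apply Submodule.subset_span
  refine ⟨w, w', w'', i, j, hij, ?_⟩
  simp [wordOf_append, wordOf_cons, mul_assoc]

theorem key (D : FreeAlgebra k (Fin 3) →ₗ[k] FreeAlgebra k (Fin 3))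
    (hLeib : ∀ a b : FreeAlgebra k (Fin 3), D (a * b) = D a * b + a * D b)
    (hx : D (ι k (0 : Fin 3)) = 0)
    (hy : D (ι k (1 : Fin 3)) = ι k (1 : Fin 3) * ι k 2 - ι k 2 * ι k 1)
    (hz : D (ι k (2 : Fin 3)) = ι k (2 : Fin 3) * ι k 1 - ι k 1 * ι k 2) :
    ∀ (t u : List (Fin 3)), asc (u ++ t) →
      wordOf k u * D (wordOf k t) ∈ Submodule.span k (genSet k) := by
  intro t
  induction t with
  | nil =>
    intro u _
    have hD1 : D (1 : FreeAlgebra k (Fin 3)) = 0 := by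
      have h := hLeib 1 1
      simp only [one_mul, mul_one] at h
      exact add_eq_left.mp h.symm
    simp [wordOf_nil, hD1]
  | cons c t ih =>
    intro u h
    rw [wordOf_cons, hLeib, mul_add, ← mul_assoc, ← mul_assoc]
    refine Submodule.add_mem _ ?_ ?_
    · have e : ∀ a b : Fin 3,
          wordOf k u * (ι k a * ι k b - ι k b * ι k a) * wordOf k t
            = wordOf k (u ++ a :: b :: t) - wordOf k (u ++ b :: a :: t) := by
        intro a b
        simp [wordOf_append, wordOf_cons, mul_sub, sub_mul, mul_assoc]
      fin_cases c
      · show wordOf k u * D (ι k (0 : Fin 3)) * wordOf k t ∈ Submodule.span k (genSet k)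
        rw [hx]
        simp
      · show wordOf k u * D (ι k (1 : Fin 3)) * wordOf k t ∈ Submodule.span k (genSet k)
        replace h : asc (u ++ (1 : Fin 3) :: t) := h
        rw [hy, e 1 2]
        exact Submodule.sub_mem _ (mem_of_asc k (asc_mid12 u t))
          (mem_of_asc k (asc_sub u (le_refl 1) h))
      · show wordOf k u * D (ι k (2 : Fin 3)) * wordOf k t ∈ Submodule.span k (genSet k)
        replace h : asc (u ++ (2 : Fin 3) :: t) := h
        rw [hz, e 2 1]
        have h21 : wordOf k (u ++ 2 :: 1 :: t) - wordOf k (u ++ 1 :: 2 :: t) ∈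
            Submodule.span k (genSet k) :=
          Submodule.sub_mem _ (mem_of_asc k (asc_sub u (by decide) h))
            (mem_of_asc k (asc_mid12 u t))
        exact h21
    · have e : wordOf k u * ι k c = wordOf k (u ++ [c]) := by
        rw [wordOf_append, wordOf_cons, wordOf_nil, mul_one]
      rw [e]
      apply ih
      rwa [List.append_assoc, List.singleton_append]

end Aux

theorem stmt5 (k : Type*) [Field k] [CharZero k]
    (D : FreeAlgebra k (Fin 3) →ₗ[k] FreeAlgebra k (Fin 3))
    (hLeib : ∀ a b : FreeAlgebra k (Fin 3), D (a * b) = D a * b + a * D b)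
    (hx : D (ι k (0 : Fin 3)) = 0)
    (hy : D (ι k (1 : Fin 3)) = ι k (1 : Fin 3) * ι k 2 - ι k 2 * ι k 1)
    (hz : D (ι k (2 : Fin 3)) = ι k (2 : Fin 3) * ι k 1 - ι k 1 * ι k 2) :
    let I3 : Submodule k (FreeAlgebra k (Fin 3)) :=
      Submodule.span k {a | ∃ w w' w'' : List (Fin 3), ∃ i j : Fin 3, i < j ∧
        a = wordOf k w * ι k i * wordOf k w' * ι k j * wordOf k w''}
    ∀ a ∈ I3, D a ∈ I3 := by
  intro I3 a ha
  have hI : I3 = Submodule.span k (genSet k) := rfl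
  rw [hI] at ha ⊢
  induction ha using Submodule.span_induction with
  | mem a h =>
    obtain ⟨w, w', w'', i, j, hij, rfl⟩ := h
    have hl : wordOf k w * ι k i * wordOf k w' * ι k j * wordOf k w''
        = wordOf k (w ++ i :: (w' ++ j :: w'')) := by
      simp [wordOf_append, wordOf_cons, mul_assoc]
    rw [hl]
    have := key k D hLeib hx hy hz (w ++ i :: (w' ++ j :: w'')) []
      (asc_of_decomp w w' w'' i j hij)
    simpa [wordOf_nil] using this
  | zero => simp
  | add x y hx' hy' ihx ihy => rw [map_add]; exact Submodule.add_mem _ ihx ihy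
  | smul r x hx' ih => rw [map_smul]; exact Submodule.smul_mem _ _ ih
end

section
/- Let k be a field of characteristic 0 and let d̄'' : k[X,Y] → k[x,y,z] be the linear map determined by d̄''(1) = 0, d̄''(X^n) = x(x−z)^{n−1} for n ≥ 1, d̄''(Y^n) = y(y−z)^{n−1} for n ≥ 1, and d̄''(X^k Y^ℓ) = x y (x−z)^{k−1}(y−z)^{ℓ−1} for k, ℓ ≥ 1. Let d̄' : k[X,Y] → k[x,y,z] be given by d̄'(f) = −f(y,z) + (x f(x,z) − y f(y,z))/(x−y) − (y f(x,y) − z f(x,z))/(y−z). Then for f ∈ k[X,Y] lying in the ideal (XY), writing g(x,y) = ((x−y)/x) f(x,y), one has (d̄' + d̄'')(f) = (xy/((x−y)(y−z))) · ( g(x−z, y−z) + g(x,z) − g(y,z) − g(x,y) ). -/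
open MvPolynomial

theorem stmt9 (k : Type*) [Field k] [CharZero k] (h : MvPolynomial (Fin 2) k)
    (x y z : MvPolynomial (Fin 3) k) (hx : x = X 0) (hy : y = X 1) (hz : z = X 2)
    (f g : MvPolynomial (Fin 2) k)
    (hf : f = X 0 * X 1 * h) (hg : g = (X 0 - X 1) * X 1 * h)
    (F G H : MvPolynomial (Fin 3) k → MvPolynomial (Fin 3) k → MvPolynomial (Fin 3) k)
    (hF : ∀ a b, F a b = aeval ![a, b] f)
    (hG : ∀ a b, G a b = aeval ![a, b] g)
    (hH : ∀ a b, H a b = aeval ![a, b] h)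
    (q1 q2 : MvPolynomial (Fin 3) k)
    (hq1 : (x - y) * q1 = x * F x z - y * F y z)
    (hq2 : (y - z) * q2 = y * F x y - z * F x z) :
    (x - y) * (y - z) * (-(F y z) + q1 - q2 + x * y * H (x - z) (y - z))
      = x * y * (G (x - z) (y - z) + G x z - G y z - G x y) := by
  have hFH : ∀ a b, F a b = a * b * H a b := by
    intro a b
    simp [hF, hf, hH]
  have hGH : ∀ a b, G a b = (a - b) * b * H a b := by
    intro a b
    simp [hG, hg, hH]
  simp only [hFH] at hq1 hq2
  simp only [hFH, hGH]
  linear_combination (y - z) * hq1 - (x - y) * hq2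
end

section
/- Let 𝔣2 be the free Lie algebra on A, B over a field k of characteristic 0, and 𝔭 = [𝔣2, 𝔣2] its derived subalgebra. Then the quotient 𝔭/[𝔭,𝔭] is an abelian Lie algebra spanned by the classes of the elements p_{kℓ} = ad(A)^{k−1} ad(B)^{ℓ−1}([A,B]) for k, ℓ ≥ 1. -/
/-!
Let `T` be the span of the `p_{kℓ}` plus `[𝔭, 𝔭]`. It is stable under `ad A`, which raises `k`,
and under `ad B`, which raises `ℓ` after being moved past the powers of `ad A`: on `𝔭` the
commutator of `ad B` and `ad A` is `ad [B, A]` with `[B, A] ∈ 𝔭`, so it lands in `[𝔭, 𝔭]`. As `A`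
and `B` generate `𝔣₂`, `T` is an ideal, and modulo `T` the generators commute because
`[A, B] = p₁₁ ∈ T`; so `𝔣₂ / T` is abelian, i.e. `𝔭 ⊆ T`.
-/

open LieAlgebra LieSubalgebra

theorem FreeLieAlgebra.lieSpan_range_of (R X : Type*) [CommRing R] :
    lieSpan R (FreeLieAlgebra R X) (Set.range (of R)) = ⊤ := by
  set K := lieSpan R (FreeLieAlgebra R X) (Set.range (of R (X := X)))
  let f : FreeLieAlgebra R X →ₗ⁅R⁆ K := lift R fun i => ⟨of R i, subset_lieSpan ⟨i, rfl⟩⟩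
  have hf : K.incl.comp f = LieHom.id := hom_ext fun i => by
    simp [f, lift_of_apply]
  refine eq_top_iff.2 fun x _ => ?_
  have hx : K.incl (f x) = x := by rw [← LieHom.comp_apply, hf, LieHom.id_apply]
  exact hx ▸ (f x).2

section

variable {R L : Type*} [CommRing R] [LieRing L] [LieAlgebra R L]

namespace LieIdeal

theorem ad_pow_apply_mem (I : LieIdeal R L) (x : L) (n : ℕ) {w : L} (hw : w ∈ I) :
    (ad R L x ^ n) w ∈ I := by
  induction n with
  | zero => exact hw
  | succ n ih => rw [pow_succ', Module.End.mul_apply]; exact I.lie_mem ih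

theorem lie_ad_pow_sub_ad_pow_lie_mem (I : LieIdeal R L) (x y : L) (n : ℕ) {w : L}
    (hw : w ∈ I) :
    ⁅y, (ad R L x ^ n) w⁆ - (ad R L x ^ n) ⁅y, w⁆ ∈
      ⁅(⁅(⊤ : LieIdeal R L), ⊤⁆ : LieIdeal R L), I⁆ := by
  induction n with
  | zero => simp
  | succ n ih =>
    have hyx : ⁅y, x⁆ ∈ (⁅(⊤ : LieIdeal R L), ⊤⁆ : LieIdeal R L) :=
      LieSubmodule.lie_mem_lie (LieSubmodule.mem_top y) (LieSubmodule.mem_top x)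
    have key : ⁅y, (ad R L x ^ (n + 1)) w⁆ - (ad R L x ^ (n + 1)) ⁅y, w⁆ =
        ⁅⁅y, x⁆, (ad R L x ^ n) w⁆ + ⁅x, ⁅y, (ad R L x ^ n) w⁆ - (ad R L x ^ n) ⁅y, w⁆⁆ := by
      rw [pow_succ', Module.End.mul_apply, Module.End.mul_apply, ad_apply, ad_apply,
        leibniz_lie, lie_sub]
      abel
    rw [key]
    exact add_mem (LieSubmodule.lie_mem_lie hyx (I.ad_pow_apply_mem x n hw))
      (LieSubmodule.lie_mem _ ih)

theorem derived_le_of_lieSpan_eq_top {s : Set L} (hs : lieSpan R L s = ⊤) (I : LieIdeal R L)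
    (hsI : ∀ x ∈ s, ∀ y ∈ s, ⁅x, y⁆ ∈ I) : ⁅(⊤ : LieIdeal R L), (⊤ : LieIdeal R L)⁆ ≤ I := by
  have hlie : ∀ x : L, ∀ y ∈ s, ⁅x, y⁆ ∈ I := by
    intro x
    have hx : x ∈ lieSpan R L s := hs ▸ LieSubalgebra.mem_top x
    induction hx using lieSpan_induction with
    | mem x hx => exact hsI x hx
    | zero => simp
    | add x x' _ _ hx hx' => intro y hy; rw [add_lie]; exact add_mem (hx y hy) (hx' y hy)
    | smul c x _ hx => intro y hy; rw [smul_lie]; exact I.smul_mem c (hx y hy)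
    | lie x x' _ _ hx hx' =>
      intro y hy
      rw [lie_lie]
      exact sub_mem (I.lie_mem (hx' y hy)) (I.lie_mem (hx y hy))
  have hs_le : lieSpan R L s ≤ LieIdeal.toLieSubalgebra R L I.normalizer :=
    lieSpan_le.2 fun y hy => (LieSubmodule.mem_normalizer I y).2 fun x => hlie x y hy
  rw [LieSubmodule.top_lie_le_iff_le_normalizer]
  exact fun x _ => hs_le (hs ▸ LieSubalgebra.mem_top x)

theorem lie_mem_span_sup {x : L} {s : Set L} (I : LieIdeal R L)
    (hs : ∀ g ∈ s, ⁅x, g⁆ ∈ Submodule.span R s ⊔ LieSubmodule.toSubmodule I) {v : L}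
    (hv : v ∈ Submodule.span R s ⊔ LieSubmodule.toSubmodule I) :
    ⁅x, v⁆ ∈ Submodule.span R s ⊔ LieSubmodule.toSubmodule I := by
  have h : Submodule.span R s ⊔ LieSubmodule.toSubmodule I ≤
      (Submodule.span R s ⊔ LieSubmodule.toSubmodule I).comap (ad R L x) :=
    sup_le (Submodule.span_le.2 hs) fun w hw => Submodule.mem_sup_right (I.lie_mem hw)
  exact h hv

end LieIdeal

theorem LieSubalgebra.lie_mem_of_lieSpan_eq_top {s : Set L} (hs : lieSpan R L s = ⊤)
    {T : Submodule R L} (hsT : ∀ x ∈ s, ∀ v ∈ T, ⁅x, v⁆ ∈ T) (x : L) {v : L} (hv : v ∈ T) :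
    ⁅x, v⁆ ∈ T := by
  have hx : x ∈ lieSpan R L s := hs ▸ LieSubalgebra.mem_top x
  induction hx using lieSpan_induction generalizing v with
  | mem x hx => exact hsT x hx v hv
  | zero => simp
  | add x x' _ _ hx hx' => rw [add_lie]; exact add_mem (hx hv) (hx' hv)
  | smul c x _ hx => rw [smul_lie]; exact T.smul_mem c (hx hv)
  | lie x x' _ _ hx hx' => rw [lie_lie]; exact sub_mem (hx (hx' hv)) (hx' (hx hv))

theorem Submodule.derived_le_of_lieSpan_eq_top {s : Set L} (hs : lieSpan R L s = ⊤)
    (T : Submodule R L) (hsT : ∀ x ∈ s, ∀ v ∈ T, ⁅x, v⁆ ∈ T)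
    (hss : ∀ x ∈ s, ∀ y ∈ s, ⁅x, y⁆ ∈ T) :
    LieSubmodule.toSubmodule ⁅(⊤ : LieIdeal R L), (⊤ : LieIdeal R L)⁆ ≤ T :=
  LieIdeal.derived_le_of_lieSpan_eq_top hs
    { T with lie_mem := fun hv => LieSubalgebra.lie_mem_of_lieSpan_eq_top hs hsT _ hv } hss

namespace LieAlgebra

variable (R) in
/-- `adPowBracket R A B (a, b)` is `p_{a+1, b+1} = ad(A)^a ad(B)^b [A, B]`. -/
def adPowBracket (A B : L) (ab : ℕ × ℕ) : L :=
  (ad R L A ^ ab.1) ((ad R L B ^ ab.2) ⁅A, B⁆)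

variable {A B : L}

theorem adPowBracket_mem_derived (ab : ℕ × ℕ) :
    adPowBracket R A B ab ∈ (⁅(⊤ : LieIdeal R L), ⊤⁆ : LieIdeal R L) :=
  LieIdeal.ad_pow_apply_mem _ A _ <| LieIdeal.ad_pow_apply_mem _ B _ <|
    LieSubmodule.lie_mem_lie (LieSubmodule.mem_top A) (LieSubmodule.mem_top B)

theorem lie_adPowBracket_left (a b : ℕ) :
    ⁅A, adPowBracket R A B (a, b)⁆ = adPowBracket R A B (a + 1, b) := by
  rw [adPowBracket, adPowBracket, pow_succ', Module.End.mul_apply, ad_apply]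

theorem lie_adPowBracket_right_sub_mem (a b : ℕ) :
    ⁅B, adPowBracket R A B (a, b)⁆ - adPowBracket R A B (a, b + 1) ∈
      (⁅(⁅(⊤ : LieIdeal R L), ⊤⁆ : LieIdeal R L), ⁅(⊤ : LieIdeal R L), ⊤⁆⁆ : LieIdeal R L) := by
  have h := LieIdeal.lie_ad_pow_sub_ad_pow_lie_mem _ A B a
    (adPowBracket_mem_derived (R := R) (A := A) (B := B) (0, b))
  rwa [adPowBracket, adPowBracket, pow_succ', Module.End.mul_apply, ad_apply]

theorem derived_eq_span_adPowBracket_sup (hAB : lieSpan R L {A, B} = ⊤) :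
    LieSubmodule.toSubmodule (⁅(⊤ : LieIdeal R L), ⊤⁆ : LieIdeal R L) =
      Submodule.span R (Set.range (adPowBracket R A B)) ⊔
        LieSubmodule.toSubmodule
          (⁅(⁅(⊤ : LieIdeal R L), ⊤⁆ : LieIdeal R L), ⁅(⊤ : LieIdeal R L), ⊤⁆⁆ : LieIdeal R L) := by
  set D : LieIdeal R L := ⁅(⊤ : LieIdeal R L), ⊤⁆
  set T := Submodule.span R (Set.range (adPowBracket R A B)) ⊔ LieSubmodule.toSubmodule ⁅D, D⁆
  have hgen : ∀ ab, adPowBracket R A B ab ∈ T :=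
    fun ab => Submodule.mem_sup_left (Submodule.subset_span ⟨ab, rfl⟩)
  have hA : ∀ v ∈ T, ⁅A, v⁆ ∈ T := fun v => LieIdeal.lie_mem_span_sup _ <| by
    rintro _ ⟨⟨a, b⟩, rfl⟩
    rw [lie_adPowBracket_left]
    exact hgen _
  have hB : ∀ v ∈ T, ⁅B, v⁆ ∈ T := fun v => LieIdeal.lie_mem_span_sup _ <| by
    rintro _ ⟨⟨a, b⟩, rfl⟩
    rw [← add_sub_cancel (adPowBracket R A B (a, b + 1)) ⁅B, _⁆]
    exact add_mem (hgen _) (Submodule.mem_sup_right (lie_adPowBracket_right_sub_mem a b))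
  have hAB_mem : ⁅A, B⁆ ∈ T := hgen (0, 0)
  refine le_antisymm (Submodule.derived_le_of_lieSpan_eq_top hAB T ?_ ?_) (sup_le ?_ ?_)
  · rintro x (rfl | rfl)
    exacts [hA, hB]
  · rintro x (rfl | rfl) y (rfl | rfl)
    · simp
    · exact hAB_mem
    · exact lie_skew x y ▸ neg_mem hAB_mem
    · simp
  · exact Submodule.span_le.2 (Set.range_subset_iff.2 adPowBracket_mem_derived)
  · exact LieSubmodule.lie_le_left D D

end LieAlgebra

end

theorem stmt12_general (k : Type*) [Field k] :
    let L := FreeLieAlgebra k (Fin 2)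
    let A : L := FreeLieAlgebra.of k 0
    let B : L := FreeLieAlgebra.of k 1
    let p : LieIdeal k L := ⁅(⊤ : LieIdeal k L), (⊤ : LieIdeal k L)⁆
    LieSubmodule.toSubmodule p =
      Submodule.span k {v : L | ∃ a b : ℕ, 1 ≤ a ∧ 1 ≤ b ∧
        v = ((LieAlgebra.ad k L A) ^ (a - 1)) (((LieAlgebra.ad k L B) ^ (b - 1)) ⁅A, B⁆)}
      ⊔ LieSubmodule.toSubmodule ⁅p, p⁆ := by
  intro L A B p
  have hrange : Set.range (FreeLieAlgebra.of k) = ({A, B} : Set L) := by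
    ext
    simp [Fin.exists_fin_two, eq_comm, A, B]
  have hAB : lieSpan k L {A, B} = ⊤ := hrange ▸ FreeLieAlgebra.lieSpan_range_of k (Fin 2)
  have hgens : {v : L | ∃ a b : ℕ, 1 ≤ a ∧ 1 ≤ b ∧
      v = ((LieAlgebra.ad k L A) ^ (a - 1)) (((LieAlgebra.ad k L B) ^ (b - 1)) ⁅A, B⁆)} =
      Set.range (LieAlgebra.adPowBracket k A B) := by
    ext v
    constructor
    · rintro ⟨a, b, -, -, rfl⟩
      exact ⟨(a - 1, b - 1), rfl⟩
    · rintro ⟨⟨a, b⟩, rfl⟩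
      exact ⟨a + 1, b + 1, le_add_self, le_add_self, rfl⟩
  rw [hgens]
  exact LieAlgebra.derived_eq_span_adPowBracket_sup hAB

theorem stmt12 (k : Type*) [Field k] [CharZero k] :
    let L := FreeLieAlgebra k (Fin 2)
    let A : L := FreeLieAlgebra.of k 0
    let B : L := FreeLieAlgebra.of k 1
    let p : LieIdeal k L := ⁅(⊤ : LieIdeal k L), (⊤ : LieIdeal k L)⁆
    LieSubmodule.toSubmodule p =
      Submodule.span k {v : L | ∃ a b : ℕ, 1 ≤ a ∧ 1 ≤ b ∧
        v = ((LieAlgebra.ad k L A) ^ (a - 1)) (((LieAlgebra.ad k L B) ^ (b - 1)) ⁅A, B⁆)}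
      ⊔ LieSubmodule.toSubmodule ⁅p, p⁆ :=
  stmt12_general k
end

section
/- Let k be a field of characteristic 0, let 𝔱3 be the Lie algebra with generators t12, t13, t23 and relations [t12+t13, t23] = 0, [t12+t23, t13] = 0, [t13+t23, t12] = 0. Then 𝔱3 is the direct sum of its center k·(t12+t13+t23) and the free Lie algebra generated by t13 and t23 (equivalently, by t12 and t23). -/
/-!
By the defining relations, `t12 + t13 + t23` brackets to zero with each generator; since bracketing
with a fixed element is a derivation, it is central. The assignment `t12 ↦ -(X + Y)`, `t13 ↦ X`,
`t23 ↦ Y` sends the generators to three elements summing to zero, so it respects the relations and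
defines a retraction `π` of `𝔱₃` onto the free Lie algebra on `X, Y`; `π` is left inverse to `φ`
and kills the centre, giving injectivity of `φ` and the trivial intersection. Finally, since
`cen` is central, `k ∙ cen ⊔ range φ` is closed under brackets, and it contains the generators.
-/

open LieSubalgebra

namespace FreeLieAlgebra

variable {R X L : Type*} [CommRing R] [LieRing L] [LieAlgebra R L]

theorem lieSpan_range_of_s18 : lieSpan R (FreeLieAlgebra R X) (Set.range (of R)) = ⊤ := by
  set S := lieSpan R (FreeLieAlgebra R X) (Set.range (of R))
  let f : FreeLieAlgebra R X →ₗ⁅R⁆ S := lift R fun x ↦ ⟨of R x, subset_lieSpan ⟨x, rfl⟩⟩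
  have hf : S.incl.comp f = LieHom.id := hom_ext fun x ↦ by simp [f]
  refine eq_top_iff.mpr fun x _ ↦ ?_
  rw [← LieHom.id_apply (R := R) x, ← hf]
  exact (f x).2

theorem lieSpan_range_comp_of {f : FreeLieAlgebra R X →ₗ⁅R⁆ L} (hf : Function.Surjective f) :
    lieSpan R L (Set.range (f ∘ of R)) = ⊤ := by
  rw [Set.range_comp, ← map_lieSpan, lieSpan_range_of_s18, ← LieSubalgebra.map_top,
    LieHom.range_eq_top]
  exact hf

end FreeLieAlgebra

namespace LieIdeal

variable {R L M : Type*} [CommRing R] [LieRing L] [LieAlgebra R L] [LieRing M] [LieAlgebra R M]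
  (I : LieIdeal R L)

def mkQ : L →ₗ⁅R⁆ L ⧸ I :=
  { (I : Submodule R L).mkQ with map_lie' := rfl }

@[simp]
theorem mkQ_apply (x : L) : I.mkQ x = LieSubmodule.Quotient.mk x := rfl

theorem mkQ_surjective : Function.Surjective I.mkQ :=
  LieSubmodule.Quotient.surjective_mk' I

theorem mkQ_eq_zero_iff {x : L} : I.mkQ x = 0 ↔ x ∈ I :=
  LieSubmodule.Quotient.mk_eq_zero I

def liftQ (f : L →ₗ⁅R⁆ M) (h : I ≤ f.ker) : L ⧸ I →ₗ⁅R⁆ M :=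
  { (I : Submodule R L).liftQ f.toLinearMap h with
    map_lie' := by
      rintro ⟨x⟩ ⟨y⟩
      exact f.map_lie x y }

@[simp]
theorem liftQ_mk (f : L →ₗ⁅R⁆ M) (h : I ≤ f.ker) (x : L) :
    I.liftQ f h (LieSubmodule.Quotient.mk x) = f x := rfl

end LieIdeal

theorem LieHom.lieSpan_le_ker_of_add_add_eq_zero {R L M : Type*} [CommRing R] [LieRing L]
    [LieAlgebra R L] [LieRing M] [LieAlgebra R M] (f : L →ₗ⁅R⁆ M) {a b c : L}
    (h : f a + f b + f c = 0) :
    LieSubmodule.lieSpan R L {⁅a + b, c⁆, ⁅a + c, b⁆, ⁅b + c, a⁆} ≤ f.ker := by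
  have key (u v w : M) (huvw : u + v + w = 0) : ⁅u + v, w⁆ = 0 := by
    rw [eq_neg_of_add_eq_zero_left huvw, neg_lie, lie_self, neg_zero]
  rw [LieSubmodule.lieSpan_le]
  rintro _ (rfl | rfl | rfl) <;>
    simp only [SetLike.mem_coe, LieHom.mem_ker, LieHom.map_lie, map_add]
  · exact key _ _ _ h
  · exact key _ _ _ (by rw [← h]; abel)
  · exact key _ _ _ (by rw [← h]; abel)

theorem LinearMap.span_singleton_inf_range_eq_bot {R M N : Type*} [Semiring R] [AddCommMonoid M]
    [Module R M] [AddCommMonoid N] [Module R N] {p : M →ₗ[R] N} {φ : N →ₗ[R] M}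
    (h : Function.LeftInverse p φ) {z : M} (hz : p z = 0) :
    Submodule.span R {z} ⊓ LinearMap.range φ = ⊥ := by
  refine (Submodule.eq_bot_iff _).mpr ?_
  rintro _ ⟨hv, w, rfl⟩
  obtain ⟨s, hs⟩ := Submodule.mem_span_singleton.mp hv
  have hw : w = 0 := by rw [← h w, ← hs, map_smul, hz, smul_zero]
  simp [hw]

section Generators

variable {R L F : Type*} [CommRing R] [LieRing L] [LieAlgebra R L] [LieRing F] [LieAlgebra R F]
  {s : Set L}

theorem lie_eq_zero_of_lieSpan_eq_top (hs : lieSpan R L s = ⊤) {z : L} (hz : ∀ x ∈ s, ⁅z, x⁆ = 0)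
    (y : L) : ⁅z, y⁆ = 0 := by
  have : LieDerivation.ad R L z = 0 :=
    LieDerivation.ext_of_lieSpan_eq_top s hs fun x hx ↦ by simpa using hz x hx
  simpa using congr($this y)

theorem lie_add_add_eq_zero_of_lieSpan_eq_top {x y z : L} (hs : lieSpan R L {x, y, z} = ⊤)
    (hxy : ⁅x + y, z⁆ = 0) (hxz : ⁅x + z, y⁆ = 0) (hyz : ⁅y + z, x⁆ = 0) (w : L) :
    ⁅x + y + z, w⁆ = 0 := by
  refine lie_eq_zero_of_lieSpan_eq_top hs ?_ w
  rintro _ (rfl | rfl | rfl)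
  · rw [← hyz]; simp only [add_lie, lie_self]; abel
  · rw [← hxz]; simp only [add_lie, lie_self]; abel
  · rw [← hxy]; simp only [add_lie, lie_self]; abel

theorem Submodule.eq_top_of_lie_mem_of_lieSpan_eq_top (hs : lieSpan R L s = ⊤)
    (p : Submodule R L) (hp : ∀ x ∈ p, ∀ y ∈ p, ⁅x, y⁆ ∈ p) (hsp : s ⊆ p) : p = ⊤ := by
  let K : LieSubalgebra R L := { p with lie_mem' := fun hx hy ↦ hp _ hx _ hy }
  have hK : K = ⊤ := eq_top_iff.mpr (hs ▸ lieSpan_le.mpr hsp)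
  simpa [K] using congr(($hK : Submodule R L))

theorem lie_mem_range_of_mem_span_sup_range {z : L} (hz : ∀ y : L, ⁅z, y⁆ = 0) (φ : F →ₗ⁅R⁆ L)
    {x y : L} (hx : x ∈ Submodule.span R {z} ⊔ LinearMap.range (φ : F →ₗ[R] L))
    (hy : y ∈ Submodule.span R {z} ⊔ LinearMap.range (φ : F →ₗ[R] L)) :
    ⁅x, y⁆ ∈ LinearMap.range (φ : F →ₗ[R] L) := by
  obtain ⟨_, hx', _, ⟨u, rfl⟩, rfl⟩ := Submodule.mem_sup.mp hx
  obtain ⟨_, hy', _, ⟨v, rfl⟩, rfl⟩ := Submodule.mem_sup.mp hy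
  obtain ⟨s, rfl⟩ := Submodule.mem_span_singleton.mp hx'
  obtain ⟨t, rfl⟩ := Submodule.mem_span_singleton.mp hy'
  have hz' (y : L) : ⁅y, z⁆ = 0 := by rw [← lie_skew, hz, neg_zero]
  exact ⟨⁅u, v⁆, by simp [hz, hz']⟩

theorem span_singleton_sup_range_eq_top (hs : lieSpan R L s = ⊤) {z : L}
    (hz : ∀ y : L, ⁅z, y⁆ = 0) (φ : F →ₗ⁅R⁆ L)
    (hsφ : ∀ x ∈ s, x ∈ Submodule.span R {z} ⊔ LinearMap.range (φ : F →ₗ[R] L)) :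
    Submodule.span R {z} ⊔ LinearMap.range (φ : F →ₗ[R] L) = ⊤ :=
  Submodule.eq_top_of_lie_mem_of_lieSpan_eq_top hs _
    (fun _ hx _ hy ↦ Submodule.mem_sup_right (lie_mem_range_of_mem_span_sup_range hz φ hx hy)) hsφ

end Generators

theorem stmt18_general (k : Type*) [Field k] :
    let L := FreeLieAlgebra k (Fin 3)
    -- generators: index 0 ↦ t12, 1 ↦ t13, 2 ↦ t23
    let a : L := FreeLieAlgebra.of k 0
    let b : L := FreeLieAlgebra.of k 1
    let c : L := FreeLieAlgebra.of k 2
    let I : LieIdeal k L :=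
      LieSubmodule.lieSpan k L {⁅a + b, c⁆, ⁅a + c, b⁆, ⁅b + c, a⁆}
    let T := L ⧸ I
    let t12 : T := LieSubmodule.Quotient.mk (N := I) a
    let t13 : T := LieSubmodule.Quotient.mk (N := I) b
    let t23 : T := LieSubmodule.Quotient.mk (N := I) c
    let cen : T := t12 + t13 + t23
    let φ : FreeLieAlgebra k (Fin 2) →ₗ⁅k⁆ T := FreeLieAlgebra.lift k ![t13, t23]
    (∀ v : T, ⁅cen, v⁆ = 0) ∧ Function.Injective φ ∧
      Submodule.span k {cen} ⊓ LinearMap.range (φ : FreeLieAlgebra k (Fin 2) →ₗ[k] T) = ⊥ ∧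
      Submodule.span k {cen} ⊔ LinearMap.range (φ : FreeLieAlgebra k (Fin 2) →ₗ[k] T) = ⊤ := by
  intro L a b c I T t12 t13 t23 cen φ
  have hgen : lieSpan k T {t12, t13, t23} = ⊤ := by
    convert FreeLieAlgebra.lieSpan_range_comp_of I.mkQ_surjective using 2
    ext; simp [Fin.exists_fin_succ, eq_comm, t12, t13, t23, a, b, c]
  have hrel : ∀ x ∈ ({⁅a + b, c⁆, ⁅a + c, b⁆, ⁅b + c, a⁆} : Set L), I.mkQ x = 0 :=
    fun x hx ↦ I.mkQ_eq_zero_iff.mpr (LieSubmodule.subset_lieSpan hx)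
  have central : ∀ v : T, ⁅cen, v⁆ = 0 :=
    lie_add_add_eq_zero_of_lieSpan_eq_top hgen (hrel ⁅a + b, c⁆ (by simp))
      (hrel ⁅a + c, b⁆ (by simp)) (hrel ⁅b + c, a⁆ (by simp))
  let X : FreeLieAlgebra k (Fin 2) := FreeLieAlgebra.of k 0
  let Y : FreeLieAlgebra k (Fin 2) := FreeLieAlgebra.of k 1
  let π₀ : L →ₗ⁅k⁆ FreeLieAlgebra k (Fin 2) := FreeLieAlgebra.lift k ![-(X + Y), X, Y]
  have hsum : π₀ a + π₀ b + π₀ c = 0 := by simp +zetaDelta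
  let π : T →ₗ⁅k⁆ FreeLieAlgebra k (Fin 2) :=
    I.liftQ π₀ (π₀.lieSpan_le_ker_of_add_add_eq_zero hsum)
  have hπφ : Function.LeftInverse π φ := LieHom.congr_fun <|
    show π.comp φ = LieHom.id from FreeLieAlgebra.hom_ext fun i ↦ by fin_cases i <;> simp +zetaDelta
  have hπcen : π cen = 0 := by simp only [cen, map_add]; exact hsum
  have h13 : t13 ∈ LinearMap.range (φ : FreeLieAlgebra k (Fin 2) →ₗ[k] T) := ⟨X, by simp +zetaDelta⟩
  have h23 : t23 ∈ LinearMap.range (φ : FreeLieAlgebra k (Fin 2) →ₗ[k] T) := ⟨Y, by simp +zetaDelta⟩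
  refine ⟨central, hπφ.injective, LinearMap.span_singleton_inf_range_eq_bot (p := π) hπφ hπcen,
    span_singleton_sup_range_eq_top hgen central φ ?_⟩
  rintro _ (rfl | rfl | rfl)
  · have ht12 : t12 = cen - t13 - t23 := by simp only [cen]; abel
    rw [ht12]
    exact sub_mem (sub_mem (Submodule.mem_sup_left (Submodule.mem_span_singleton_self cen))
      (Submodule.mem_sup_right h13)) (Submodule.mem_sup_right h23)
  · exact Submodule.mem_sup_right h13
  · exact Submodule.mem_sup_right h23

theorem stmt18 (k : Type*) [Field k] [CharZero k] :
    let L := FreeLieAlgebra k (Fin 3)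
    -- generators: index 0 ↦ t12, 1 ↦ t13, 2 ↦ t23
    let a : L := FreeLieAlgebra.of k 0
    let b : L := FreeLieAlgebra.of k 1
    let c : L := FreeLieAlgebra.of k 2
    let I : LieIdeal k L :=
      LieSubmodule.lieSpan k L {⁅a + b, c⁆, ⁅a + c, b⁆, ⁅b + c, a⁆}
    let T := L ⧸ I
    let t12 : T := LieSubmodule.Quotient.mk (N := I) a
    let t13 : T := LieSubmodule.Quotient.mk (N := I) b
    let t23 : T := LieSubmodule.Quotient.mk (N := I) c
    let cen : T := t12 + t13 + t23
    let φ : FreeLieAlgebra k (Fin 2) →ₗ⁅k⁆ T := FreeLieAlgebra.lift k ![t13, t23]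
    (∀ v : T, ⁅cen, v⁆ = 0) ∧ Function.Injective φ ∧
      Submodule.span k {cen} ⊓ LinearMap.range (φ : FreeLieAlgebra k (Fin 2) →ₗ[k] T) = ⊥ ∧
      Submodule.span k {cen} ⊔ LinearMap.range (φ : FreeLieAlgebra k (Fin 2) →ₗ[k] T) = ⊤ :=
  stmt18_general k
end
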